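/- Suppose the Hermitian form ⟨·,·⟩ is orthomodular and let M be a closed subspace of E. Then: (a) every closed subspace L of E with L ⊆ M remains closed relative to M, i.e. (L^⊥ ∩ M)^⊥ ∩ M = L; and (b) the form restricted to M is orthomodular, i.e. for every subspace L ⊆ M satisfying (L^⊥ ∩ M)^⊥ ∩ M = L, one has L + (L^⊥ ∩ M) = M. -/

import Mathlib

/-- A (nondegenerate) Hermitian space: a division ring `K` with an involution,
a left `K`-vector space `E`, and a Hermitian form on `E`. -/
structure HermitianSpace (K E : Type*) [DivisionRing K] [AddCommGroup E] [Module K E] where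
  star : K → K
  star_add : ∀ a b : K, star (a + b) = star a + star b
  star_mul : ∀ a b : K, star (a * b) = star b * star a
  star_star : ∀ a : K, star (star a) = a
  form : E → E → K
  form_add_left : ∀ x y z : E, form (x + y) z = form x z + form y z
  form_add_right : ∀ x y z : E, form x (y + z) = form x y + form x z
  form_smul_left : ∀ (ρ : K) (x y : E), form (ρ • x) y = ρ * form x y
  form_smul_right : ∀ (ρ : K) (x y : E), form x (ρ • y) = form x y * star ρ
  nondeg : ∀ a : E, (∀ x : E, form a x = 0) → a = 0
  hermitian : ∀ x y : E, star (form x y) = form y x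

namespace HermitianSpace

variable {K E : Type*} [DivisionRing K] [AddCommGroup E] [Module K E]

/-- The orthogonal companion `M^⊥` of a subspace `M`. -/
def perp (h : HermitianSpace K E) (M : Submodule K E) : Submodule K E where
  carrier := {x : E | ∀ m ∈ M, h.form x m = 0}
  add_mem' := fun {a b} ha hb => by
    intro m hm
    rw [h.form_add_left, ha m hm, hb m hm, add_zero]
  zero_mem' := by
    intro m hm
    have h0 : h.form ((0 : K) • (0 : E)) m = 0 * h.form 0 m := h.form_smul_left 0 0 m
    simpa using h0
  smul_mem' := fun c a ha => by
    intro m hm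
    rw [h.form_smul_left, ha m hm, mul_zero]

/-- The form is orthomodular when `M + M^⊥ = E` for every closed subspace `M`. -/
def Orthomodular (h : HermitianSpace K E) : Prop :=
  ∀ M : Submodule K E, h.perp (h.perp M) = M → M ⊔ h.perp M = ⊤

/-- The form is anisotropic when `⟨x, x⟩ ≠ 0` for every nonzero `x`. -/
def Anisotropic (h : HermitianSpace K E) : Prop :=
  ∀ x : E, x ≠ 0 → h.form x x ≠ 0

end HermitianSpace


/-!
Restricting to a closed subspace `M` with `M + M^⊥ = E` does not change double orthogonals
of subspaces `L ≤ M`: the modular law splits `L^⊥ = (L^⊥ ∩ M) + M^⊥`, and taking orthogonals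
gives `(L^⊥ ∩ M)^⊥ ∩ M = L^⊥⊥`. Hence closedness of `L` relative to `M` and in `E` agree, and
for such `L` the modular law again turns `L + L^⊥ = E` into `L + (L^⊥ ∩ M) = M`.
-/

namespace HermitianSpace

variable {K E : Type*} [DivisionRing K] [AddCommGroup E] [Module K E] (h : HermitianSpace K E)

theorem star_zero : h.star 0 = 0 := by
  simpa using h.star_add 0 0

theorem form_eq_zero_comm {x y : E} (hxy : h.form x y = 0) : h.form y x = 0 := by
  rw [← h.hermitian, hxy, h.star_zero]

theorem le_perp_comm {A B : Submodule K E} : A ≤ h.perp B ↔ B ≤ h.perp A :=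
  ⟨fun hAB _ hb _ ha => h.form_eq_zero_comm (hAB ha _ hb),
    fun hBA _ ha _ hb => h.form_eq_zero_comm (hBA hb _ ha)⟩

theorem perp_gc : GaloisConnection (OrderDual.toDual ∘ h.perp) (h.perp ∘ OrderDual.ofDual) :=
  fun _ _ => h.le_perp_comm

theorem perp_antitone {A B : Submodule K E} (hAB : A ≤ B) : h.perp B ≤ h.perp A :=
  h.perp_gc.monotone_l hAB

theorem perp_sup (A B : Submodule K E) : h.perp (A ⊔ B) = h.perp A ⊓ h.perp B :=
  h.perp_gc.l_sup

theorem perp_eq_perp_inf_sup_perp {L M : Submodule K E} (hsplit : M ⊔ h.perp M = ⊤)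
    (hLM : L ≤ M) : h.perp L = (h.perp L ⊓ M) ⊔ h.perp M := by
  rw [inf_sup_assoc_of_le _ (h.perp_antitone hLM), hsplit, inf_top_eq]

theorem perp_perp_inf_inf_eq_perp_perp {L M : Submodule K E} (hM : h.perp (h.perp M) = M)
    (hsplit : M ⊔ h.perp M = ⊤) (hLM : L ≤ M) :
    h.perp (h.perp L ⊓ M) ⊓ M = h.perp (h.perp L) := by
  calc h.perp (h.perp L ⊓ M) ⊓ M = h.perp (h.perp L ⊓ M) ⊓ h.perp (h.perp M) := by rw [hM]
    _ = h.perp (h.perp L) := by rw [← perp_sup, ← h.perp_eq_perp_inf_sup_perp hsplit hLM]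

end HermitianSpace

/-- In an orthomodular Hermitian space, (a) a closed subspace `L` contained in a
closed subspace `M` remains closed relative to `M`, and (b) the form restricted
to a closed subspace `M` is again orthomodular. -/
theorem orthomodular_restrict {K E : Type*} [DivisionRing K] [AddCommGroup E] [Module K E]
    (h : HermitianSpace K E) (hom : h.Orthomodular)
    (M : Submodule K E) (hM : h.perp (h.perp M) = M) :
    (∀ L : Submodule K E, L ≤ M → h.perp (h.perp L) = L →
        h.perp (h.perp L ⊓ M) ⊓ M = L) ∧
    (∀ L : Submodule K E, L ≤ M → h.perp (h.perp L ⊓ M) ⊓ M = L →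
        L ⊔ (h.perp L ⊓ M) = M) := by
  have hsplit : M ⊔ h.perp M = ⊤ := hom M hM
  refine ⟨fun L hLM hL => (h.perp_perp_inf_inf_eq_perp_perp hM hsplit hLM).trans hL,
    fun L hLM hL => ?_⟩
  have hLclosed : h.perp (h.perp L) = L :=
    (h.perp_perp_inf_inf_eq_perp_perp hM hsplit hLM).symm.trans hL
  rw [← sup_inf_assoc_of_le _ hLM, hom L hLclosed, top_inf_eq]
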